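/- Let n ≥ 2 and let W = {±1}^n ⋊ S_n act on ℝ^n by signed permutations of the coordinates. Let c = (1/2, 1/2, …, 1/2); its stabilizer W_c in W is the symmetric group S_n acting by permutation of coordinates. Then every S_n-invariant polynomial function on ℝ^n lies in the ℝ-subalgebra generated by the W-invariant polynomial functions f together with their translates v ↦ f(v + c). -/

import Mathlib

open scoped RealInnerProductSpace

/-- The signed permutation `(ε, σ)` acting on `ℝ^n`: `x ↦ (ε i * x (σ i))_i`. -/
noncomputable def sgnPerm {n : ℕ} (ε : Fin n → ℝ) (σ : Equiv.Perm (Fin n))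
    (x : EuclideanSpace ℝ (Fin n)) : EuclideanSpace ℝ (Fin n) :=
  (WithLp.toLp 2 (fun i => ε i * x (σ i)) : EuclideanSpace ℝ (Fin n))

/-- A polynomial function on a real vector space `M`: an element of the `ℝ`-subalgebra of
`M → ℝ` generated by the linear functionals. -/
def IsPolyFun {M : Type*} [AddCommGroup M] [Module ℝ M] (f : M → ℝ) : Prop :=
  f ∈ Algebra.adjoin ℝ {g : M → ℝ | ∃ l : M →ₗ[ℝ] ℝ, g = ⇑l}

/-- Invariance of `f : ℝ^n → ℝ` under the group `W = {±1}^n ⋊ S_n` of all signed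
permutations of the coordinates. -/
def IsWInv {n : ℕ} (f : EuclideanSpace ℝ (Fin n) → ℝ) : Prop :=
  ∀ (ε : Fin n → ℝ), (∀ i, ε i = 1 ∨ ε i = -1) → ∀ σ : Equiv.Perm (Fin n),
    ∀ x, f (sgnPerm ε σ x) = f x

/-- Invariance of `f : ℝ^n → ℝ` under the group `W° = {±1}°^n ⋊ S_n` of signed
permutations with an even number of sign changes (`∏ ε i = 1`). -/
def IsW0Inv {n : ℕ} (f : EuclideanSpace ℝ (Fin n) → ℝ) : Prop :=
  ∀ (ε : Fin n → ℝ), (∀ i, ε i = 1 ∨ ε i = -1) → (∏ i, ε i = 1) →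
    ∀ σ : Equiv.Perm (Fin n), ∀ x, f (sgnPerm ε σ x) = f x

/-! A polynomial function invariant under coordinate permutations comes from a symmetric
polynomial, hence (in characteristic zero) is a polynomial in the power sums `∑ xᵢ ^ k`.
Even power sums are `W`-invariant. For odd `k`, translating the `W`-invariant `∑ xᵢ ^ (k + 1)`
by `c = (1/2, …, 1/2)` gives `∑ xᵢ ^ (k + 1) + (k + 1)/2 · ∑ xᵢ ^ k` plus lower power sums, so
by induction every power sum lies in the algebra generated by `W`-invariants and their
translates. -/

open MvPolynomial

namespace MvPolynomial

variable {σ R : Type*} [Fintype σ] [Field R] [CharZero R]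

/-- By Newton's identities, `k * esymm k` is a polynomial in lower `esymm`s and power sums. -/
theorem esymm_mem_adjoin_range_psum (k : ℕ) :
    esymm σ R k ∈ Algebra.adjoin R (Set.range (psum σ R)) := by
  set S := Algebra.adjoin R (Set.range (psum σ R))
  induction k using Nat.strong_induction_on with
  | _ k ih =>
  rcases Nat.eq_zero_or_pos k with rfl | hk
  · simp [S.one_mem]
  have hk' : (k : R) ≠ 0 := by exact_mod_cast hk.ne'
  refine (Submodule.smul_mem_iff (Subalgebra.toSubmodule S) hk').1 ?_
  rw [Subalgebra.mem_toSubmodule, Algebra.smul_def, map_natCast, mul_esymm_eq_sum]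
  refine S.mul_mem (S.pow_mem (S.neg_mem S.one_mem) _) (S.sum_mem fun a ha => ?_)
  rw [Finset.mem_filter] at ha
  exact S.mul_mem (S.mul_mem (S.pow_mem (S.neg_mem S.one_mem) _) (ih a.1 ha.2))
    (Algebra.subset_adjoin ⟨a.2, rfl⟩)

theorem IsSymmetric.mem_adjoin_range_psum {p : MvPolynomial σ R} (hp : p.IsSymmetric) :
    p ∈ Algebra.adjoin R (Set.range (psum σ R)) := by
  obtain ⟨q, hq⟩ := esymmAlgHom_surjective (σ := σ) R le_rfl ⟨p, hp⟩
  have hpq : p = aeval (fun i : Fin (Fintype.card σ) => esymm σ R (i + 1)) q := by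
    rw [← esymmAlgHom_apply, hq]
  have hmem :
      p ∈ Algebra.adjoin R (Set.range fun i : Fin (Fintype.card σ) => esymm σ R (i + 1)) := by
    rw [Algebra.adjoin_range_eq_range_aeval, hpq]
    exact AlgHom.mem_range_self _ _
  refine Algebra.adjoin_le ?_ hmem
  rintro _ ⟨i, rfl⟩
  exact esymm_mem_adjoin_range_psum _

end MvPolynomial

section PolynomialFunctions

variable {ι : Type*}

noncomputable def coordEval (ι : Type*) : MvPolynomial ι ℝ →ₐ[ℝ] (EuclideanSpace ℝ ι → ℝ) :=
  aeval fun i x => x i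

theorem coordEval_apply (P : MvPolynomial ι ℝ) (x : EuclideanSpace ℝ ι) :
    coordEval ι P x = eval (fun i => x i) P := by
  induction P using MvPolynomial.induction_on <;> simp_all [coordEval]

theorem coordEval_injective : Function.Injective (coordEval ι) := fun P Q h =>
  MvPolynomial.funext fun x => by
    simpa [coordEval_apply] using congrFun h (WithLp.toLp 2 x)

theorem coordEval_rename (e : Equiv.Perm ι) (P : MvPolynomial ι ℝ) (x : EuclideanSpace ℝ ι) :
    coordEval ι (rename e P) x = coordEval ι P (WithLp.toLp 2 (x.ofLp ∘ e)) := by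
  simp [coordEval_apply, eval_rename, Function.comp_def]

theorem isSymmetric_of_coordEval_perm_invariant {P : MvPolynomial ι ℝ}
    (h : ∀ (e : Equiv.Perm ι) (x : EuclideanSpace ℝ ι),
      coordEval ι P (WithLp.toLp 2 (x.ofLp ∘ e)) = coordEval ι P x) :
    P.IsSymmetric := fun e =>
  coordEval_injective (funext fun x => by rw [coordEval_rename, h])

theorem adjoin_linearMap_eq_range_coordEval [Fintype ι] :
    Algebra.adjoin ℝ {g : EuclideanSpace ℝ ι → ℝ | ∃ l : EuclideanSpace ℝ ι →ₗ[ℝ] ℝ, g = ⇑l} =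
      (coordEval ι).range := by
  let b := EuclideanSpace.basisFun ι ℝ
  rw [coordEval, ← Algebra.adjoin_range_eq_range_aeval]
  refine le_antisymm (Algebra.adjoin_le ?_) (Algebra.adjoin_mono ?_)
  · rintro _ ⟨l, rfl⟩
    have hl : ⇑l = ∑ i, l (b i) • fun x : EuclideanSpace ℝ ι => x i := by
      funext x
      conv_lhs => rw [← b.sum_repr x]
      simp [b, map_sum, mul_comm]
    rw [hl]
    exact Subalgebra.sum_mem _ fun i _ =>
      Subalgebra.smul_mem _ (Algebra.subset_adjoin (Set.mem_range_self i)) _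
  · rintro _ ⟨i, rfl⟩
    exact ⟨(EuclideanSpace.proj i : EuclideanSpace ℝ ι →L[ℝ] ℝ).toLinearMap, rfl⟩

theorem isPolyFun_iff_mem_range_coordEval [Fintype ι] {f : EuclideanSpace ℝ ι → ℝ} :
    IsPolyFun f ↔ f ∈ (coordEval ι).range := by
  rw [IsPolyFun, adjoin_linearMap_eq_range_coordEval]

end PolynomialFunctions

section PowerSums

variable {ι : Type*}

noncomputable def powSum (ι : Type*) [Fintype ι] (k : ℕ) : EuclideanSpace ℝ ι → ℝ :=
  fun x => ∑ i, x i ^ k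

variable [Fintype ι]

theorem coordEval_psum (k : ℕ) : coordEval ι (psum ι ℝ k) = powSum ι k := by
  funext x
  simp [coordEval_apply, psum, powSum]

theorem isPolyFun_powSum (k : ℕ) : IsPolyFun (powSum ι k) :=
  isPolyFun_iff_mem_range_coordEval.2 ⟨_, coordEval_psum k⟩

theorem mem_adjoin_range_powSum_of_perm_invariant {f : EuclideanSpace ℝ ι → ℝ} (hf : IsPolyFun f)
    (hinv : ∀ (e : Equiv.Perm ι) (x : EuclideanSpace ℝ ι), f (WithLp.toLp 2 (x.ofLp ∘ e)) = f x) :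
    f ∈ Algebra.adjoin ℝ (Set.range (powSum ι)) := by
  obtain ⟨P, rfl⟩ := isPolyFun_iff_mem_range_coordEval.1 hf
  have hP : P.IsSymmetric := isSymmetric_of_coordEval_perm_invariant hinv
  have hmap : coordEval ι P ∈ (Algebra.adjoin ℝ (Set.range (psum ι ℝ))).map (coordEval ι) :=
    ⟨P, hP.mem_adjoin_range_psum, rfl⟩
  rwa [AlgHom.map_adjoin, ← Set.range_comp, show coordEval ι ∘ psum ι ℝ = powSum ι from
    funext coordEval_psum] at hmap

theorem powSum_add_const {c : EuclideanSpace ℝ ι} {a : ℝ} (hc : ∀ i, c i = a) (k : ℕ) :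
    (fun v => powSum ι k (v + c)) =
      ∑ j ∈ Finset.range (k + 1), ((k.choose j : ℝ) * a ^ (k - j)) • powSum ι j := by
  funext v
  simp only [powSum, PiLp.add_apply, hc, add_pow, Finset.sum_apply, Pi.smul_apply, smul_eq_mul,
    Finset.mul_sum]
  rw [Finset.sum_comm]
  exact Finset.sum_congr rfl fun j _ => Finset.sum_congr rfl fun i _ => by ring

/-- The translate of `powSum (k + 1)` is `powSum (k + 1) + (k + 1) a • powSum k` plus lower
power sums, so for odd `k` the power sum `powSum k` is recovered from even ones and translates. -/
theorem powSum_mem_of_even_mem (S : Subalgebra ℝ (EuclideanSpace ℝ ι → ℝ))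
    {c : EuclideanSpace ℝ ι} {a : ℝ} (ha : a ≠ 0) (hc : ∀ i, c i = a)
    (heven : ∀ k, Even k → powSum ι k ∈ S)
    (hshift : ∀ k, Even k → (fun v => powSum ι k (v + c)) ∈ S) (k : ℕ) :
    powSum ι k ∈ S := by
  induction k using Nat.strong_induction_on with
  | _ k ih =>
  rcases Nat.even_or_odd k with hk | hk
  · exact heven k hk
  have hk1 : Even (k + 1) := hk.add_one
  have hsplit := powSum_add_const (ι := ι) hc (k + 1)
  rw [Finset.sum_range_succ, Finset.sum_range_succ, Nat.choose_self, Nat.choose_succ_self_right,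
    Nat.sub_self, Nat.add_sub_cancel_left] at hsplit
  have hlead : ((k + 1 : ℝ) * a) • powSum ι k = (fun v => powSum ι (k + 1) (v + c)) -
      powSum ι (k + 1) - ∑ j ∈ Finset.range k,
        (((k + 1).choose j : ℝ) * a ^ (k + 1 - j)) • powSum ι j := by
    rw [hsplit]
    push_cast
    simp only [pow_one, pow_zero, mul_one, one_smul]
    abel
  refine (Submodule.smul_mem_iff (Subalgebra.toSubmodule S)
    (mul_ne_zero (Nat.cast_add_one_ne_zero k) ha)).1 ?_
  rw [Subalgebra.mem_toSubmodule, hlead]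
  exact S.sub_mem (S.sub_mem (hshift _ hk1) (heven _ hk1))
    (S.sum_mem fun j hj => S.smul_mem (ih j (Finset.mem_range.1 hj)) _)

end PowerSums

theorem isWInv_powSum {n k : ℕ} (hk : Even k) : IsWInv (powSum (Fin n) k) := by
  intro ε hε σ x
  have hεk : ∀ i, ε i ^ k = 1 := fun i => by
    rcases hε i with h | h <;> simp [h, hk.neg_one_pow]
  simp only [powSum, sgnPerm, PiLp.toLp_apply, mul_pow, hεk, one_mul]
  exact Equiv.sum_comp σ (fun j => x j ^ k)

theorem sgnPerm_one {n : ℕ} (σ : Equiv.Perm (Fin n)) (x : EuclideanSpace ℝ (Fin n)) :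
    sgnPerm (fun _ => 1) σ x = WithLp.toLp 2 (x.ofLp ∘ σ) := by
  ext i
  simp [sgnPerm]

theorem BC_stabilizer_of_c_invariants_generated_general
    (n : ℕ)
    (c : EuclideanSpace ℝ (Fin n))
    (hc : ∀ i : Fin n, c i = (1 : ℝ) / 2)
    (f : EuclideanSpace ℝ (Fin n) → ℝ) (hf : IsPolyFun f)
    -- `f` is invariant under the stabilizer `W_c = S_n` of `c` in `W`,
    -- i.e. under all permutations of the coordinates
    (hinv : ∀ σ : Equiv.Perm (Fin n), ∀ x, f (sgnPerm (fun _ => 1) σ x) = f x) :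
    f ∈ Algebra.adjoin ℝ
      ({g : EuclideanSpace ℝ (Fin n) → ℝ | IsPolyFun g ∧ IsWInv g} ∪
       {g : EuclideanSpace ℝ (Fin n) → ℝ | ∃ h : EuclideanSpace ℝ (Fin n) → ℝ,
          (IsPolyFun h ∧ IsWInv h) ∧ g = fun v => h (v + c)}) := by
  refine Algebra.adjoin_le ?_ (mem_adjoin_range_powSum_of_perm_invariant hf fun σ x => ?_)
  · rintro _ ⟨k, rfl⟩
    refine powSum_mem_of_even_mem _ (by norm_num) hc (fun k hk => ?_) (fun k hk => ?_) k
    · exact Algebra.subset_adjoin (Or.inl ⟨isPolyFun_powSum k, isWInv_powSum hk⟩)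
    · exact Algebra.subset_adjoin (Or.inr ⟨_, ⟨isPolyFun_powSum k, isWInv_powSum hk⟩, rfl⟩)
  · rw [← sgnPerm_one, hinv]

theorem BC_stabilizer_of_c_invariants_generated
    (n : ℕ) (hn : 2 ≤ n)
    (c : EuclideanSpace ℝ (Fin n))
    (hc : ∀ i : Fin n, c i = (1 : ℝ) / 2)
    (f : EuclideanSpace ℝ (Fin n) → ℝ) (hf : IsPolyFun f)
    -- `f` is invariant under the stabilizer `W_c = S_n` of `c` in `W`,
    -- i.e. under all permutations of the coordinates
    (hinv : ∀ σ : Equiv.Perm (Fin n), ∀ x, f (sgnPerm (fun _ => 1) σ x) = f x) :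
    f ∈ Algebra.adjoin ℝ
      ({g : EuclideanSpace ℝ (Fin n) → ℝ | IsPolyFun g ∧ IsWInv g} ∪
       {g : EuclideanSpace ℝ (Fin n) → ℝ | ∃ h : EuclideanSpace ℝ (Fin n) → ℝ,
          (IsPolyFun h ∧ IsWInv h) ∧ g = fun v => h (v + c)}) :=
  BC_stabilizer_of_c_invariants_generated_general n c hc f hf hinv
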